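/- Let K₁ > 0, ε > 0, λ > 0 with 4K₁ − 2λ − 2λε − 4λK₁² > 0, and let μ > max{λ/2, (K₁² − λ²ε − 2λ²K₁²)/(4K₁ − 2λ − 2λε − 4λK₁²)}. Then the symmetric 2×2 real matrix 𝒟₂ = [[λ/2 − μ, μ − K₁/2], [μ − K₁/2, λε/2 + λK₁² − μ]] is negative definite. -/
import Mathlib


open Matrix

/-- The matrix 𝒟₂ = [[λ/2 − μ, μ − K₁/2], [μ − K₁/2, λε/2 + λK₁² − μ]] is negative
definite, i.e. xᵀ 𝒟₂ x < 0 for all nonzero x ∈ ℝ². -/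
theorem stmt_14 (K₁ ε lam μ : ℝ) (hK₁ : 0 < K₁) (hε : 0 < ε) (hlam : 0 < lam)
    (hden : 0 < 4 * K₁ - 2 * lam - 2 * lam * ε - 4 * lam * K₁ ^ 2)
    (hμ : max (lam / 2)
        ((K₁ ^ 2 - lam ^ 2 * ε - 2 * lam ^ 2 * K₁ ^ 2) /
          (4 * K₁ - 2 * lam - 2 * lam * ε - 4 * lam * K₁ ^ 2)) < μ) :
    ∀ x : Fin 2 → ℝ, x ≠ 0 →
      x ⬝ᵥ ((!![lam / 2 - μ, μ - K₁ / 2; μ - K₁ / 2, lam * ε / 2 + lam * K₁ ^ 2 - μ]) *ᵥ x) < 0 := by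
  intro x hx
  obtain ⟨h1, h2⟩ := max_lt_iff.mp hμ
  rw [div_lt_iff₀ hden] at h2
  set a := lam / 2 - μ with ha_def
  set b := μ - K₁ / 2 with hb_def
  set d := lam * ε / 2 + lam * K₁ ^ 2 - μ with hd_def
  have ha : a < 0 := by simp [ha_def]; linarith
  have hdet : 0 < a * d - b * b := by
    simp only [ha_def, hb_def, hd_def]; nlinarith
  have hq : x ⬝ᵥ ((!![a, b; b, d]) *ᵥ x)
      = a * x 0 ^ 2 + 2 * b * (x 0 * x 1) + d * x 1 ^ 2 := by
    simp [Matrix.mulVec, dotProduct, Fin.sum_univ_two]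
    ring
  rw [hq]
  by_cases h1' : x 1 = 0
  · have h0 : x 0 ≠ 0 := by
      intro h0
      apply hx
      funext i
      fin_cases i <;> simp [h0, h1']
    have : 0 < x 0 ^ 2 := by positivity
    rw [h1']
    nlinarith [mul_pos_of_neg_of_neg ha (neg_neg_iff_pos.mpr this)]
  · have : 0 < x 1 ^ 2 := by positivity
    nlinarith [sq_nonneg (a * x 0 + b * x 1), mul_pos hdet this]
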